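/- Let N be a structural conflict net. Then every FS-run R of N is conflict-free. -/

import Mathlib

open scoped Classical

noncomputable section

/-- A place/transition net: `pre t s` and `post t s` are the arc weights
`F(s,t)` and `F(t,s)` of the flow relation, and `M0` is the initial marking.
Every transition has a finite non-empty set of preplaces and a finite set of
postplaces. -/
structure Net (S : Type*) (T : Type*) where
  pre : T → S → ℕ
  post : T → S → ℕ
  M0 : S → ℕ
  pre_fin : ∀ t, {s | pre t s ≠ 0}.Finite
  pre_ne : ∀ t, ∃ s, pre t s ≠ 0
  post_fin : ∀ t, {s | post t s ≠ 0}.Finite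

namespace Net

variable {S T : Type*}

/-- `•G`: the multiset of preplaces of a finite multiset `G` of transitions,
as a function `S → ℕ`. -/
def preM (N : Net S T) (G : Multiset T) (s : S) : ℕ :=
  (G.map fun t => N.pre t s).sum

/-- `G•`: the multiset of postplaces of a finite multiset `G` of transitions. -/
def postM (N : Net S T) (G : Multiset T) (s : S) : ℕ :=
  (G.map fun t => N.post t s).sum

/-- The (non-empty, finite) multiset `G` of transitions is enabled in marking `M`. -/
def Enabled (N : Net S T) (M : S → ℕ) (G : Multiset T) : Prop :=
  G ≠ 0 ∧ ∀ s, N.preM G s ≤ M s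

/-- `G` is a step from `M` to `M'`. -/
def Step (N : Net S T) (M : S → ℕ) (G : Multiset T) (M' : S → ℕ) : Prop :=
  N.Enabled M G ∧ ∀ s, M' s = M s - N.preM G s + N.postM G s

/-- `M →σ M'`: sequential firing of the word `σ` of transitions. -/
def FireSeq (N : Net S T) : (S → ℕ) → List T → (S → ℕ) → Prop
  | M, [], M' => M' = M
  | M, t :: σ, M' => ∃ M₁, N.Step M {t} M₁ ∧ N.FireSeq M₁ σ M'

/-- `σ` is a firing sequence of `N`. -/
def FS (N : Net S T) (σ : List T) : Prop := ∃ M', N.FireSeq N.M0 σ M'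

/-- `M` is reachable from the initial marking. -/
def Reachable (N : Net S T) (M : S → ℕ) : Prop := ∃ σ, N.FireSeq N.M0 σ M

/-- Two firing sequences are adjacent iff they differ only in the exchange of
two neighbouring transitions that could have been fired in one step. -/
def Adjacent (N : Net S T) (σ ρ : List T) : Prop :=
  N.FS σ ∧ N.FS ρ ∧
    ∃ (σ₁ : List T) (t u : T) (σ₂ : List T) (M : S → ℕ),
      σ = σ₁ ++ t :: u :: σ₂ ∧ ρ = σ₁ ++ u :: t :: σ₂ ∧
      N.FireSeq N.M0 σ₁ M ∧ N.Enabled M (t ::ₘ {u})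

/-- `↔*`: the reflexive transitive closure of adjacency. -/
def AdjEquiv (N : Net S T) : List T → List T → Prop :=
  Relation.ReflTransGen N.Adjacent

/-- A structural conflict net: transitions that can occur together in a step
never share a preplace. -/
def StructuralConflictNet (N : Net S T) : Prop :=
  ∀ t u : T, (∃ M, N.Reachable M ∧ N.Enabled M (t ::ₘ {u})) →
    ∀ s, N.pre t s = 0 ∨ N.pre u s = 0

/-- The finite non-empty multiset `G` of transitions is in (semantic) conflict
in the marking `M`: every `G↾{t}` is enabled but `G` itself is not. -/
def InConflict (N : Net S T) (M : S → ℕ) (G : Multiset T) : Prop :=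
  G ≠ 0 ∧ (∀ t ∈ G, N.Enabled M (Multiset.replicate (G.count t) t)) ∧
    ¬ N.Enabled M G

/-- `N` is (semantic) conflict-free. -/
def ConflictFree (N : Net S T) : Prop :=
  ∀ M, N.Reachable M → ∀ G : Multiset T, ¬ N.InConflict M G

end Net

/-- The type of firing sequences of `N`. -/
def FSeq {S T : Type*} (N : Net S T) := {σ : List T // N.FS σ}

/-- Partial FS-runs: `↔*`-equivalence classes of firing sequences. -/
def PartialFSRun {S T : Type*} (N : Net S T) :=
  Quot (fun σ ρ : FSeq N => N.AdjEquiv σ.1 ρ.1)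

/-- `[σ]`, the `↔*`-equivalence class of a firing sequence. -/
def fsClass {S T : Type*} (N : Net S T) (σ : FSeq N) : PartialFSRun N :=
  Quot.mk _ σ

/-- The prefix order on partial FS-runs: `[σ] ≤ [ρ]` iff
`∃ μ, σ ≤ μ ↔* ρ`. -/
def fsRunLE {S T : Type*} (N : Net S T) (x y : PartialFSRun N) : Prop :=
  ∃ σ ρ : FSeq N, fsClass N σ = x ∧ fsClass N ρ = y ∧
    ∃ μ : List T, σ.1 <+: μ ∧ N.AdjEquiv μ ρ.1

/-- An FS-run: a prefix-closed and directed set of partial FS-runs. -/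
def IsFSRun {S T : Type*} (N : Net S T) (R : Set (PartialFSRun N)) : Prop :=
  (∀ x y, fsRunLE N x y → y ∈ R → x ∈ R) ∧
  (∀ x ∈ R, ∀ y ∈ R, ∃ z ∈ R, fsRunLE N x z ∧ fsRunLE N y z)

/-- An FS-run `R` is conflict-free iff whenever, for every `t` in a finite
non-empty multiset `G`, the class of `σ t^{G(t)}` belongs to `R` and
`M₀ →σ →(G↾{t})`, then `M₀ →σ →G`. -/
def ConflictFreeFSRun {S T : Type*} (N : Net S T)
    (R : Set (PartialFSRun N)) : Prop :=
  ∀ (G : Multiset T) (σ : List T), G ≠ 0 →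
    (∀ t ∈ G,
      (∃ h : N.FS (σ ++ List.replicate (G.count t) t),
        fsClass N ⟨σ ++ List.replicate (G.count t) t, h⟩ ∈ R) ∧
      ∃ M, N.FireSeq N.M0 σ M ∧
        N.Enabled M (Multiset.replicate (G.count t) t)) →
    ∃ M, N.FireSeq N.M0 σ M ∧ N.Enabled M G

/-- The raw data of a candidate (GR-)process of a net with places `S` and
transitions `T`: an occurrence net whose places are drawn from `α` and whose
transitions are drawn from `β`, together with the projections to `S` and `T`. -/
structure RawProc (S T α β : Type*) where
  places : Set α
  transitions : Set β
  flowPT : α → β → ℕ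
  flowTP : β → α → ℕ
  initMark : α → ℕ
  projS : α → S
  projT : β → T

namespace RawProc

variable {S T α β : Type*}

/-- The flow relation of the occurrence net, as a relation on `α ⊕ β`. -/
def flowRel (P : RawProc S T α β) : (α ⊕ β) → (α ⊕ β) → Prop := fun x y =>
  match x, y with
  | Sum.inl p, Sum.inr t => P.flowPT p t ≠ 0
  | Sum.inr t, Sum.inl p => P.flowTP t p ≠ 0
  | _, _ => False

/-- `F⁺`, the transitive closure of the flow relation. -/
def causal (P : RawProc S T α β) : (α ⊕ β) → (α ⊕ β) → Prop :=
  Relation.TransGen P.flowRel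

/-- `P` is finite iff its set of transitions is finite. -/
def FiniteProc (P : RawProc S T α β) : Prop := P.transitions.Finite

/-- `Q` is a prefix of `P` (written `Q ≤ P`): the places and transitions of `Q`
are included in those of `P`, the initial markings coincide, and flow relation
and projection of `Q` are the restrictions of those of `P`. -/
def IsPrefix (Q P : RawProc S T α β) : Prop :=
  Q.places ⊆ P.places ∧ Q.transitions ⊆ P.transitions ∧
  Q.initMark = P.initMark ∧
  (∀ p ∈ Q.places, ∀ t ∈ Q.transitions,
    Q.flowPT p t = P.flowPT p t ∧ Q.flowTP t p = P.flowTP t p) ∧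
  (∀ p ∈ Q.places, Q.projS p = P.projS p) ∧
  (∀ t ∈ Q.transitions, Q.projT t = P.projT t)

/-- Isomorphism of processes of the same net: a bijection between places and
between transitions preserving flow, initial marking and the projections. -/
def Iso (P Q : RawProc S T α β) : Prop :=
  ∃ (fS : α → α) (fT : β → β),
    Set.BijOn fS P.places Q.places ∧ Set.BijOn fT P.transitions Q.transitions ∧
    (∀ p ∈ P.places, ∀ t ∈ P.transitions,
      Q.flowPT (fS p) (fT t) = P.flowPT p t ∧
      Q.flowTP (fT t) (fS p) = P.flowTP t p) ∧
    (∀ p ∈ P.places, Q.initMark (fS p) = P.initMark p) ∧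
    (∀ p ∈ P.places, Q.projS (fS p) = P.projS p) ∧
    (∀ t ∈ P.transitions, Q.projT (fT t) = P.projT t)

/-- `swap(P,p,q)`: exchange the outgoing arcs of the places `p` and `q`. -/
def swap (P : RawProc S T α β) (p q : α) : RawProc S T α β :=
  { P with flowPT := fun x t =>
      if x = p then P.flowPT q t
      else if x = q then P.flowPT p t
      else P.flowPT x t }

/-- One step swapping equivalence `P ≈s Q`: `swap(P,p,q)` is isomorphic to `Q`
for some causally unrelated places `p`, `q` with the same image in the net. -/
def SwapStep (P Q : RawProc S T α β) : Prop :=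
  ∃ p q : α, p ∈ P.places ∧ q ∈ P.places ∧ P.projS p = P.projS q ∧
    ¬ P.causal (Sum.inl p) (Sum.inl q) ∧ ¬ P.causal (Sum.inl q) (Sum.inl p) ∧
    Iso (P.swap p q) Q

/-- `≈s*`: the reflexive transitive closure of one step swapping equivalence. -/
def SwapEquiv : RawProc S T α β → RawProc S T α β → Prop :=
  Relation.ReflTransGen SwapStep

/-- `Lin(P)`: the linearisations of a finite process `P`, i.e. the images under
the projection of the enumerations of its transitions compatible with `F*`. -/
def Lin (P : RawProc S T α β) : Set (List T) :=
  { σ | ∃ ts : List β, ts.Nodup ∧ (∀ t : β, t ∈ ts ↔ t ∈ P.transitions) ∧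
      (∀ (i j : ℕ) (hi : i < ts.length) (hj : j < ts.length),
        Relation.ReflTransGen P.flowRel
          (Sum.inr (ts.get ⟨i, hi⟩)) (Sum.inr (ts.get ⟨j, hj⟩)) → i ≤ j) ∧
      σ = ts.map P.projT }

end RawProc

/-- `P` is a (GR-)process of the net `N`: its underlying net is an occurrence
net (unbranched places, acyclic flow, finite causal pasts, transitions with
finite non-empty presets and finite postsets), the flow, initial marking and
projections are normalised to vanish outside the places/transitions, and the
projection maps the process onto `N` respecting initial marking and arc
weights (counted via the preimages of the projection). -/
structure IsProcessOf {S T α β : Type*} (N : Net S T)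
    (P : RawProc S T α β) : Prop where
  flowPT_dom : ∀ p t, P.flowPT p t ≠ 0 → p ∈ P.places ∧ t ∈ P.transitions
  flowTP_dom : ∀ t p, P.flowTP t p ≠ 0 → p ∈ P.places ∧ t ∈ P.transitions
  initMark_dom : ∀ p, p ∉ P.places → P.initMark p = 0
  pre_place : ∀ p ∈ P.places,
    {t | P.flowTP t p ≠ 0}.Subsingleton ∧ ∀ t, P.flowTP t p ≤ 1
  post_place : ∀ p ∈ P.places,
    {t | P.flowPT p t ≠ 0}.Subsingleton ∧ ∀ t, P.flowPT p t ≤ 1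
  init_one : ∀ p ∈ P.places, (∀ t, P.flowTP t p = 0) → P.initMark p = 1
  init_zero : ∀ p ∈ P.places, (∃ t, P.flowTP t p ≠ 0) → P.initMark p = 0
  acyclic : ∀ x, ¬ P.causal x x
  finite_past : ∀ t ∈ P.transitions,
    {u : β | P.causal (Sum.inr u) (Sum.inr t)}.Finite
  t_pre_fin : ∀ t ∈ P.transitions, {p | P.flowPT p t ≠ 0}.Finite
  t_pre_ne : ∀ t ∈ P.transitions, ∃ p, P.flowPT p t ≠ 0
  t_post_fin : ∀ t ∈ P.transitions, {p | P.flowTP t p ≠ 0}.Finite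
  proj_init_fin : ∀ s : S, {p | P.projS p = s ∧ P.initMark p ≠ 0}.Finite
  proj_init : ∀ s : S, (∑ᶠ p ∈ {p | P.projS p = s}, P.initMark p) = N.M0 s
  proj_pre : ∀ t ∈ P.transitions, ∀ s : S,
    (∑ᶠ p ∈ {p | P.projS p = s}, P.flowPT p t) = N.pre (P.projT t) s
  proj_post : ∀ t ∈ P.transitions, ∀ s : S,
    (∑ᶠ p ∈ {p | P.projS p = s}, P.flowTP t p) = N.post (P.projT t) s

/-- The type of finite GR-processes of `N` with places in `α` and transitions
in `β`. -/
def FinProcOf {S T : Type*} (N : Net S T) (α β : Type*) :=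
  {P : RawProc S T α β // IsProcessOf N P ∧ P.FiniteProc}

/-- Partial BD-runs: `≈s*`-equivalence classes of finite GR-processes. -/
def PartialBDRun {S T : Type*} (N : Net S T) (α β : Type*) :=
  Quot (fun P Q : FinProcOf N α β => RawProc.SwapEquiv P.1 Q.1)

/-- `⟦P⟧`, the `≈s*`-equivalence class of a finite process. -/
def bdClass {S T α β : Type*} (N : Net S T) (P : FinProcOf N α β) :
    PartialBDRun N α β :=
  Quot.mk _ P

/-- The lifted prefix relation on `≈s*`-equivalence classes:
`⟦P⟧ ≤ ⟦Q⟧` iff `P ≈s* P' ≤ Q' ≈s* Q` for some `P'`, `Q'`. -/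
def bdRunLE {S T α β : Type*} (N : Net S T)
    (x y : PartialBDRun N α β) : Prop :=
  ∃ P Q : FinProcOf N α β, bdClass N P = x ∧ bdClass N Q = y ∧
    ∃ P' Q' : RawProc S T α β,
      RawProc.SwapEquiv P.1 P' ∧ RawProc.IsPrefix P' Q' ∧
      RawProc.SwapEquiv Q' Q.1

/-- A BD-run: a prefix-closed and directed set of partial BD-runs. -/
def IsBDRun {S T α β : Type*} (N : Net S T)
    (R : Set (PartialBDRun N α β)) : Prop :=
  (∀ x y, bdRunLE N x y → y ∈ R → x ∈ R) ∧
  (∀ x ∈ R, ∀ y ∈ R, ∃ z ∈ R, bdRunLE N x z ∧ bdRunLE N y z)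

/-- `⌊P⌋ = ↓{⟦P'⟧ | P' ≤ P, P' finite}`: the prefix-closure of the set of
classes of finite prefixes of the process `P`. -/
def BDify {S T α β : Type*} (N : Net S T) (P : RawProc S T α β) :
    Set (PartialBDRun N α β) :=
  { x | ∃ Q : FinProcOf N α β, RawProc.IsPrefix Q.1 P ∧ bdRunLE N x (bdClass N Q) }

/-- Swapping equivalence `P ≈s∞ Q` of (possibly infinite) processes:
`↓{⟦P'⟧ | P' ≤ P, P' finite} = ↓{⟦Q'⟧ | Q' ≤ Q, Q' finite}`. -/
def SwapEquivInf {S T α β : Type*} (N : Net S T)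
    (P Q : RawProc S T α β) : Prop :=
  BDify N P = BDify N Q

/-- A canonical carrier type, large enough to host every GR-process of a net
with places `S` and transitions `T`. -/
abbrev BigCarrier (S T : Type*) := Set ((S ⊕ T) × ℕ)

end

/-!
Fix `σ` and `G` as in `ConflictFreeFSRun`, and let `M` be the marking reached by `σ`. For two
distinct `t, u ∈ G`, directedness of the run gives `σ t … ↔* σ u …`. Projecting a firing
sequence onto `{t, u}` is invariant under swapping neighbours that are never enabled together,
so `t` and `u` must be enabled together in some reachable marking, and structural conflict
freeness makes their presets disjoint. Hence on each place at most one `t ∈ G` consumes tokens,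
and it consumes `G(t) · •t(s) ≤ M(s)` of them, i.e. `M` enables `G`.
-/

theorem Multiset.sum_map_le_of_pairwise_eq_zero {α : Type*} {G : Multiset α} {f : α → ℕ}
    {m : ℕ} (hf : ∀ t ∈ G, ∀ u ∈ G, t ≠ u → f t = 0 ∨ f u = 0)
    (hm : ∀ t ∈ G, G.count t * f t ≤ m) :
    (G.map f).sum ≤ m := by
  by_cases h : ∃ t ∈ G, f t ≠ 0
  · obtain ⟨t, ht, hft⟩ := h
    rw [Finset.sum_multiset_map_count, Finset.sum_eq_single t]
    · exact hm t ht
    · intro u hu hut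
      rcases hf u (Multiset.mem_toFinset.1 hu) t ht hut with h0 | h0
      · simp [h0]
      · exact absurd h0 hft
    · exact fun h' => absurd (Multiset.mem_toFinset.2 ht) h'
  · push Not at h
    have hzero : (G.map f).sum = 0 := Multiset.sum_eq_zero fun x hx => by
      obtain ⟨t, ht, rfl⟩ := Multiset.mem_map.1 hx
      exact h t ht
    omega

namespace Net

variable {S T : Type*} {N : Net S T} {M M' M₁ M₂ : S → ℕ} {t u : T} {σ ρ r : List T}

lemma preM_pair (t u : T) (s : S) : N.preM (t ::ₘ {u}) s = N.pre t s + N.pre u s := by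
  simp [preM]

lemma preM_replicate (k : ℕ) (t : T) (s : S) :
    N.preM (Multiset.replicate k t) s = k * N.pre t s := by
  simp [preM, Multiset.map_replicate]

lemma step_singleton_iff :
    N.Step M {t} M' ↔ (∀ s, N.pre t s ≤ M s) ∧ ∀ s, M' s = M s - N.pre t s + N.post t s := by
  simp [Step, Enabled, preM, postM]

lemma FireSeq.unique {σ : List T} (h₁ : N.FireSeq M σ M₁) (h₂ : N.FireSeq M σ M₂) :
    M₁ = M₂ := by
  induction σ generalizing M with
  | nil => exact h₁.trans h₂.symm
  | cons a σ ih =>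
    obtain ⟨Ma, ⟨-, ha⟩, h₁⟩ := h₁
    obtain ⟨Mb, ⟨-, hb⟩, h₂⟩ := h₂
    obtain rfl : Ma = Mb := funext fun s => by rw [ha s, hb s]
    exact ih h₁ h₂

lemma fireSeq_append :
    N.FireSeq M (σ ++ ρ) M' ↔ ∃ M₁, N.FireSeq M σ M₁ ∧ N.FireSeq M₁ ρ M' := by
  induction σ generalizing M with
  | nil => simp [FireSeq]
  | cons a σ ih => simp only [List.cons_append, FireSeq, ih]; grind

lemma enabled_pair_comm : N.Enabled M (t ::ₘ {u}) ↔ N.Enabled M (u ::ₘ {t}) := by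
  rw [← Multiset.insert_eq_cons, Multiset.pair_comm, Multiset.insert_eq_cons]

/-- Joint enabledness keeps the truncated subtractions exact, so both orders end in the same
marking. -/
lemma fireSeq_cons_cons_swap (hen : N.Enabled M (t ::ₘ {u}))
    (h : N.FireSeq M (t :: u :: σ) M') : N.FireSeq M (u :: t :: σ) M' := by
  obtain ⟨M₁, ht, M₂, hu, hrest⟩ := h
  rw [step_singleton_iff] at ht hu
  have hpre : ∀ s, N.pre t s + N.pre u s ≤ M s := fun s => (preM_pair t u s) ▸ hen.2 s
  refine ⟨fun s => M s - N.pre u s + N.post u s, ?_, M₂, ?_, hrest⟩ <;>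
    rw [step_singleton_iff] <;> refine ⟨fun s => ?_, fun s => ?_⟩ <;>
    grind

lemma Adjacent.symm (h : N.Adjacent σ ρ) : N.Adjacent ρ σ := by
  obtain ⟨hσ, hρ, σ₁, t, u, σ₂, M, rfl, rfl, hM, hen⟩ := h
  exact ⟨hρ, hσ, σ₁, u, t, σ₂, M, rfl, rfl, hM, enabled_pair_comm.1 hen⟩

lemma AdjEquiv.symm (h : N.AdjEquiv σ ρ) : N.AdjEquiv ρ σ := by
  induction h with
  | refl => exact .refl
  | tail _ hbc ih => exact .head hbc.symm ih

lemma AdjEquiv.fs_left (h : N.AdjEquiv σ ρ) (hρ : N.FS ρ) : N.FS σ := by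
  induction h with
  | refl => exact hρ
  | tail _ hbc ih => exact ih hbc.1

lemma Adjacent.append_right (h : N.Adjacent σ ρ) (hσr : N.FS (σ ++ r)) :
    N.Adjacent (σ ++ r) (ρ ++ r) := by
  obtain ⟨-, -, σ₁, t, u, σ₂, M, rfl, rfl, hM, hen⟩ := h
  obtain ⟨Mf, hMf⟩ := hσr
  simp only [List.append_assoc, List.cons_append] at hMf ⊢
  obtain ⟨M', hM', hrest⟩ := fireSeq_append.1 hMf
  obtain rfl := hM'.unique hM
  exact ⟨⟨Mf, hMf⟩, ⟨Mf, fireSeq_append.2 ⟨M', hM', fireSeq_cons_cons_swap hen hrest⟩⟩,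
    σ₁, t, u, σ₂ ++ r, M', rfl, rfl, hM', hen⟩

lemma AdjEquiv.append_right (h : N.AdjEquiv σ ρ) (hσr : N.FS (σ ++ r)) :
    N.AdjEquiv (σ ++ r) (ρ ++ r) := by
  induction h with
  | refl => exact .refl
  | tail _ hbc ih => exact ih.tail (hbc.append_right (ih.symm.fs_left hσr))

lemma AdjEquiv.filter_eq {p : T → Bool}
    (hp : ∀ a b M, N.Reachable M → N.Enabled M (a ::ₘ {b}) → p a → p b → a = b)
    (h : N.AdjEquiv σ ρ) : σ.filter p = ρ.filter p := by
  induction h with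
  | refl => rfl
  | tail _ hbc ih =>
    obtain ⟨-, -, σ₁, a, b, σ₂, M, rfl, rfl, hM, hen⟩ := hbc
    rw [ih]
    by_cases hpa : p a <;> by_cases hpb : p b
    · rw [hp a b M ⟨σ₁, hM⟩ hen hpa hpb]
    all_goals simp [hpa, hpb]

lemma exists_reachable_enabled_pair_of_adjEquiv (htu : t ≠ u) {l k : List T}
    (h : N.AdjEquiv (σ ++ t :: l) (σ ++ u :: k)) :
    ∃ M, N.Reachable M ∧ N.Enabled M (t ::ₘ {u}) := by
  by_contra! hno
  have hp : ∀ a b M, N.Reachable M → N.Enabled M (a ::ₘ {b}) →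
      decide (a = t ∨ a = u) → decide (b = t ∨ b = u) → a = b := by
    intro a b M hM hen ha hb
    simp only [decide_eq_true_eq] at ha hb
    rcases ha with rfl | rfl <;> rcases hb with rfl | rfl
    · rfl
    · exact absurd hen (hno M hM)
    · exact absurd (enabled_pair_comm.1 hen) (hno M hM)
    · rfl
  have hf := h.filter_eq hp
  simp only [List.filter_append, List.filter_cons, or_true, true_or, decide_true,
    ↓reduceIte, List.append_cancel_left_eq, List.cons.injEq] at hf
  exact htu hf.1

end Net

lemma fsClass_eq_iff {S T : Type*} {N : Net S T} {σ ρ : FSeq N} :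
    fsClass N σ = fsClass N ρ ↔ N.AdjEquiv σ.1 ρ.1 :=
  have equiv : Equivalence (fun σ ρ : FSeq N => N.AdjEquiv σ.1 ρ.1) :=
    ⟨fun _ => .refl, Net.AdjEquiv.symm, .trans⟩
  Quot.eq.trans equiv.eqvGen_iff

lemma fsRunLE.exists_adjEquiv_append {S T : Type*} {N : Net S T} {σ ρ : FSeq N}
    (h : fsRunLE N (fsClass N σ) (fsClass N ρ)) : ∃ r, N.AdjEquiv (σ.1 ++ r) ρ.1 := by
  obtain ⟨σ', ρ', hσ', hρ', _, ⟨r, rfl⟩, hμ⟩ := h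
  have hσ'σ : N.AdjEquiv σ'.1 σ.1 := fsClass_eq_iff.1 hσ'
  exact ⟨r, ((hσ'σ.append_right (hμ.fs_left ρ'.2)).symm.trans hμ).trans (fsClass_eq_iff.1 hρ')⟩

lemma IsFSRun.exists_adjEquiv_append {S T : Type*} {N : Net S T} {R : Set (PartialFSRun N)}
    (hR : IsFSRun N R) {σ ρ : FSeq N} (hσ : fsClass N σ ∈ R) (hρ : fsClass N ρ ∈ R) :
    ∃ r r', N.AdjEquiv (σ.1 ++ r) (ρ.1 ++ r') := by
  obtain ⟨z, -, hσz, hρz⟩ := hR.2 _ hσ _ hρ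
  obtain ⟨ζ, rfl⟩ := Quot.exists_rep z
  obtain ⟨r, hr⟩ := fsRunLE.exists_adjEquiv_append hσz
  obtain ⟨r', hr'⟩ := fsRunLE.exists_adjEquiv_append hρz
  exact ⟨r, r', hr.trans hr'.symm⟩

/-- Theorem 5 of the paper: every FS-run of a structural
conflict net is conflict-free. -/
theorem fsRun_conflictFree_of_structuralConflictNet {S T : Type*}
    (N : Net S T) (hN : N.StructuralConflictNet)
    (R : Set (PartialFSRun N)) (hR : IsFSRun N R) :
    ConflictFreeFSRun N R := by
  intro G σ hG hG_run
  obtain ⟨t₀, ht₀⟩ := Multiset.exists_mem_of_ne_zero hG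
  obtain ⟨-, M, hM, -⟩ := hG_run t₀ ht₀
  have hbound : ∀ t ∈ G, ∀ s, G.count t * N.pre t s ≤ M s := by
    intro t ht s
    obtain ⟨-, M', hM', hen⟩ := hG_run t ht
    rw [← hM'.unique hM, ← Net.preM_replicate]
    exact hen.2 s
  have hdisjoint : ∀ t ∈ G, ∀ u ∈ G, t ≠ u → ∀ s, N.pre t s = 0 ∨ N.pre u s = 0 := by
    intro t ht u hu htu
    obtain ⟨⟨_, hRt⟩, -⟩ := hG_run t ht
    obtain ⟨⟨_, hRu⟩, -⟩ := hG_run u hu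
    obtain ⟨r, r', h⟩ := hR.exists_adjEquiv_append hRt hRu
    obtain ⟨m, hm⟩ := Nat.exists_eq_add_one_of_ne_zero (Multiset.count_ne_zero.2 ht)
    obtain ⟨n, hn⟩ := Nat.exists_eq_add_one_of_ne_zero (Multiset.count_ne_zero.2 hu)
    simp only [hm, hn, List.replicate_succ, List.append_assoc, List.cons_append] at h
    exact hN t u (Net.exists_reachable_enabled_pair_of_adjEquiv htu h)
  exact ⟨M, hM, hG, fun s => Multiset.sum_map_le_of_pairwise_eq_zero
    (fun t ht u hu htu => hdisjoint t ht u hu htu s) (fun t ht => hbound t ht s)⟩
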